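/- arXiv:2212.00083 — 8 statements merged into one kernel-verified Lean document; each statement's English description precedes it below -/
import Mathlib

section
/- Let n ≥ 1 be an integer. Let r(1), …, r(n) and c(1), …, c(n) be reals with r(j) ∈ [2^(4j+2−5n), 2^(4j+3−5n)] and c(j) ∈ [2^(4j−5n), 2^(4j+1−5n)] for each j, and let ε_max and δ_max be reals in [0, 2^(−100n)]. Then for every i with 1 ≤ i ≤ n: c(i) > δ_max + 2n·ε_max + Σ_{j=1}^{i−1} r(j). -/
/-! In units of `X = 2 ^ (4i - 5n) ≤ c(i)`, the rewards of the lower bits are dominated by a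
geometric series of ratio `16` summing to at most `8/15 · X`, and the small terms contribute at
most `(2n + 1) · 2 ^ (-100n) ≤ X / 4`; since `8/15 + 1/4 < 1`, the claim follows. -/

open Finset

lemma sum_Icc_le_of_le_two_zpow (a : ℤ) (r : ℕ → ℝ) (m : ℕ)
    (hr : ∀ j, 1 ≤ j → j ≤ m → r j ≤ (2 : ℝ) ^ (4 * (j : ℤ) + a)) :
    ∑ j ∈ Icc 1 m, r j ≤ (2 : ℝ) ^ (4 * (m : ℤ) + 4 + a) / 15 := by
  induction m with
  | zero => simp only [zero_lt_one, Icc_eq_empty_of_lt, sum_empty]; positivity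
  | succ m ih =>
    rw [sum_Icc_succ_top (by omega)]
    have hsum := ih fun j h1 h2 => hr j h1 (by omega)
    have hlast := hr (m + 1) (by omega) le_rfl
    have hpow : (2 : ℝ) ^ (4 * ((m + 1 : ℕ) : ℤ) + 4 + a)
        = 16 * (2 : ℝ) ^ (4 * (m : ℤ) + 4 + a) := by
      rw [show 4 * ((m + 1 : ℕ) : ℤ) + 4 + a = 4 * (m : ℤ) + 4 + a + 4 by push_cast; ring,
        zpow_add₀ two_ne_zero]
      norm_num [mul_comm]
    have hshift : (2 : ℝ) ^ (4 * ((m + 1 : ℕ) : ℤ) + a) = (2 : ℝ) ^ (4 * (m : ℤ) + 4 + a) := by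
      push_cast; ring_nf
    rw [hpow]
    linarith

lemma two_mul_add_one_le_two_pow (n : ℕ) : 2 * (n : ℝ) + 1 ≤ 2 ^ (n + 1) := by
  have := one_add_mul_le_pow (a := (1 : ℝ)) (by norm_num) n
  norm_num at this
  rw [pow_succ]
  linarith

lemma mul_two_zpow_neg_le (n i : ℕ) (hi : 1 ≤ i) :
    (2 * (n : ℝ) + 1) * (2 : ℝ) ^ (-(100 * (n : ℤ)))
      ≤ (2 : ℝ) ^ (4 * (i : ℤ) - 5 * (n : ℤ)) / 4 := by
  calc (2 * (n : ℝ) + 1) * (2 : ℝ) ^ (-(100 * (n : ℤ)))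
      ≤ (2 : ℝ) ^ (n + 1) * (2 : ℝ) ^ (-(100 * (n : ℤ))) := by
        gcongr; exact two_mul_add_one_le_two_pow n
    _ = (2 : ℝ) ^ ((n : ℤ) + 1 - 100 * n) := by
        rw [← zpow_natCast, ← zpow_add₀ two_ne_zero]; push_cast; ring_nf
    _ ≤ (2 : ℝ) ^ (4 * (i : ℤ) - 5 * n - 2) := zpow_le_zpow_right₀ one_le_two (by omega)
    _ = (2 : ℝ) ^ (4 * (i : ℤ) - 5 * (n : ℤ)) / 4 := by
        rw [sub_eq_add_neg _ (2 : ℤ), zpow_add₀ two_ne_zero]; norm_num; ring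

theorem reachability_params_prop6_general (n : ℕ)
    (r c : ℕ → ℝ)
    (hr : ∀ j, 1 ≤ j → j ≤ n →
      r j ∈ Set.Icc ((2 : ℝ) ^ (4 * (j : ℤ) + 2 - 5 * (n : ℤ)))
        ((2 : ℝ) ^ (4 * (j : ℤ) + 3 - 5 * (n : ℤ))))
    (hc : ∀ j, 1 ≤ j → j ≤ n →
      c j ∈ Set.Icc ((2 : ℝ) ^ (4 * (j : ℤ) - 5 * (n : ℤ)))
        ((2 : ℝ) ^ (4 * (j : ℤ) + 1 - 5 * (n : ℤ))))
    (εmax δmax : ℝ)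
    (hε : εmax ∈ Set.Icc (0 : ℝ) ((2 : ℝ) ^ (-(100 * (n : ℤ)))))
    (hδ : δmax ∈ Set.Icc (0 : ℝ) ((2 : ℝ) ^ (-(100 * (n : ℤ))))) :
    ∀ i, 1 ≤ i → i ≤ n →
      c i > δmax + 2 * (n : ℝ) * εmax + ∑ j ∈ Finset.Icc 1 (i - 1), r j := by
  intro i hi hin
  set X : ℝ := (2 : ℝ) ^ (4 * (i : ℤ) - 5 * (n : ℤ))
  have hX : 0 < X := by positivity
  have hci : X ≤ c i := (hc i hi hin).1
  have hsum : ∑ j ∈ Icc 1 (i - 1), r j ≤ 8 / 15 * X := by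
    refine (sum_Icc_le_of_le_two_zpow (3 - 5 * n) r (i - 1) fun j h1 h2 =>
      (hr j h1 (by omega)).2.trans_eq (by rw [add_sub_assoc])).trans_eq ?_
    rw [show 4 * ((i - 1 : ℕ) : ℤ) + 4 + (3 - 5 * n) = 4 * (i : ℤ) - 5 * n + 3 by
      push_cast [Nat.cast_sub hi]; ring, zpow_add₀ two_ne_zero]
    norm_num; ring
  have hsmall : δmax + 2 * (n : ℝ) * εmax ≤ X / 4 := by
    have := mul_two_zpow_neg_le n i hi
    nlinarith [hε.1, hε.2, hδ.2, (Nat.cast_nonneg n : (0 : ℝ) ≤ n)]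
  linarith

/-- Reachability-parameter version of Proposition 6: with rewards
r(j) ∈ [2^(4j+2−5n), 2^(4j+3−5n)], costs c(j) ∈ [2^(4j−5n), 2^(4j+1−5n)], and small
quantities ε_max, δ_max ∈ [0, 2^(−100n)], the cost c(i) exceeds all small
rewards/costs plus the sum of all lower bits' rewards. -/
theorem reachability_params_prop6 (n : ℕ) (hn : 1 ≤ n)
    (r c : ℕ → ℝ)
    (hr : ∀ j, 1 ≤ j → j ≤ n →
      r j ∈ Set.Icc ((2 : ℝ) ^ (4 * (j : ℤ) + 2 - 5 * (n : ℤ)))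
        ((2 : ℝ) ^ (4 * (j : ℤ) + 3 - 5 * (n : ℤ))))
    (hc : ∀ j, 1 ≤ j → j ≤ n →
      c j ∈ Set.Icc ((2 : ℝ) ^ (4 * (j : ℤ) - 5 * (n : ℤ)))
        ((2 : ℝ) ^ (4 * (j : ℤ) + 1 - 5 * (n : ℤ))))
    (εmax δmax : ℝ)
    (hε : εmax ∈ Set.Icc (0 : ℝ) ((2 : ℝ) ^ (-(100 * (n : ℤ)))))
    (hδ : δmax ∈ Set.Icc (0 : ℝ) ((2 : ℝ) ^ (-(100 * (n : ℤ))))) :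
    ∀ i, 1 ≤ i → i ≤ n →
      c i > δmax + 2 * (n : ℝ) * εmax + ∑ j ∈ Finset.Icc 1 (i - 1), r j :=
  reachability_params_prop6_general n r c hr hc εmax δmax hε hδ
end

section
/- Let n ≥ 1 be an integer. Let p_2, …, p_n and S_1, …, S_{n−1} be reals, let V'_1, …, V'_n be reals (the values of the random vertices 1', …, n') and V_0, V_1, …, V_{n−1} be reals (the values of vertex 0' and the min-vertices 1, …, n−1), and suppose that for every k with 2 ≤ k ≤ n: V'_k = p_k · V'_{k−1} + (1 − p_k) · V_{k−2}, and V_{k−1} = (1 − S_{k−1}) · V_{k−2} + S_{k−1} · V'_{k−1}. Define diff_1 = V'_1 − V_0 and diff_k = V'_k − V_{k−1} for 2 ≤ k ≤ n. Then for every k with 1 ≤ k ≤ n: diff_k = diff_1 · ∏_{i=2}^k (p_i − S_{i−1}). -/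
/-- The diff product formula in the Melekopoglou–Condon basic graph: if the
values V' of the random vertices and V of vertex 0' and the min-vertices
satisfy the recurrences V'_k = p_k·V'_{k−1} + (1−p_k)·V_{k−2} and
V_{k−1} = (1−S_{k−1})·V_{k−2} + S_{k−1}·V'_{k−1} for 2 ≤ k ≤ n, then
diff_k = V'_k − V_{k−1} satisfies diff_k = diff_1 · ∏_{i=2}^k (p_i − S_{i−1}),
where diff_1 = V'_1 − V_0. -/
theorem diff_product_formula (n : ℕ) (hn : 1 ≤ n)
    (p S V' V : ℕ → ℝ)
    (hV' : ∀ k, 2 ≤ k → k ≤ n →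
      V' k = p k * V' (k - 1) + (1 - p k) * V (k - 2))
    (hV : ∀ k, 2 ≤ k → k ≤ n →
      V (k - 1) = (1 - S (k - 1)) * V (k - 2) + S (k - 1) * V' (k - 1)) :
    ∀ k, 1 ≤ k → k ≤ n →
      V' k - V (k - 1) = (V' 1 - V 0) * ∏ i ∈ Finset.Icc 2 k, (p i - S (i - 1)) := by
  intro k
  induction k with
  | zero => intro h; omega
  | succ m ih =>
    intro _ hle
    rcases Nat.eq_or_lt_of_le (show 1 ≤ m + 1 from Nat.le_add_left 1 m) with h1 | h1
    · simp [← h1]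
    · have hm : 1 ≤ m := by omega
      have h2 : 2 ≤ m + 1 := by omega
      have := ih hm (by omega)
      have e1 := hV' (m + 1) h2 hle
      have e2 := hV (m + 1) h2 hle
      simp only [Nat.add_sub_cancel, show m + 1 - 2 = m - 1 from rfl] at e1 e2 ⊢
      rw [Finset.prod_Icc_succ_top h2, e1, e2]
      simp only [Nat.add_sub_cancel]
      linear_combination (p (m + 1) - S m) * this
end

section
/- Suppose S' is a policy under which vertex k is switchable, and S is obtained from S' by flipping bit k (so S_k = 1 − S'_k and S_j = S'_j for j ≠ k). If S_{k+1} = 1 and S_j = 0 for all j with k+2 ≤ j ≤ n, then every vertex in {k+1, k+2, …, n} is switchable under S. -/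
/-- The value difference at min-vertex k in the Melekopoglou–Condon basic graph,
via the product formula: diff_1 = −p_1·c and diff_k = diff_1 · ∏_{i=2}^k (p_i − S_{i−1}). -/
noncomputable def diffMC (p : ℕ → ℝ) (c : ℝ) (S : ℕ → ℕ) (k : ℕ) : ℝ :=
  (-(p 1) * c) * ∏ i ∈ Finset.Icc 2 k, (p i - (S (i - 1) : ℝ))

/-- Vertex k ∈ {1,…,n} is switchable under policy S iff S_k = 0 and diff_k < 0,
or S_k = 1 and diff_k > 0. -/
def switchableMC (n : ℕ) (p : ℕ → ℝ) (c : ℝ) (S : ℕ → ℕ) (k : ℕ) : Prop :=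
  1 ≤ k ∧ k ≤ n ∧
    ((S k = 0 ∧ diffMC p c S k < 0) ∨ (S k = 1 ∧ 0 < diffMC p c S k))

lemma diffMC_succ (p : ℕ → ℝ) (c : ℝ) (S : ℕ → ℕ) (k : ℕ) (hk : 1 ≤ k) :
    diffMC p c S (k + 1) = diffMC p c S k * (p (k + 1) - (S k : ℝ)) := by
  unfold diffMC
  rw [Finset.prod_Icc_succ_top (by omega : 2 ≤ k + 1)]
  simp [mul_assoc]

/-- Lemma (MC Lemma 2.6, robust version): if vertex k is switchable under S' and
S is obtained from S' by flipping bit k, and under S we have S_{k+1} = 1 and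
S_j = 0 for all k+2 ≤ j ≤ n, then every vertex in {k+1, …, n} is switchable
under S. -/
theorem switch_makes_higher_switchable (n : ℕ) (hn : 1 ≤ n)
    (p : ℕ → ℝ) (c : ℝ)
    (hp : ∀ i, 1 ≤ i → i ≤ n → p i ∈ Set.Ioo (0 : ℝ) 1) (hc : 0 < c)
    (S' : ℕ → ℕ) (hS'pol : ∀ j, S' j ≤ 1)
    (k : ℕ) (hsw : switchableMC n p c S' k)
    (S : ℕ → ℕ) (hS : ∀ j, S j = if j = k then 1 - S' j else S' j)
    (hSk1 : S (k + 1) = 1)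
    (hS0 : ∀ j, k + 2 ≤ j → j ≤ n → S j = 0) :
    ∀ j, k + 1 ≤ j → j ≤ n → switchableMC n p c S j := by
  obtain ⟨hk1, hkn, hcases⟩ := hsw
  have heq : diffMC p c S k = diffMC p c S' k := by
    unfold diffMC
    congr 1
    refine Finset.prod_congr rfl ?_
    intro i hi
    simp only [Finset.mem_Icc] at hi
    have hne : i - 1 ≠ k := by omega
    rw [hS (i - 1), if_neg hne]
  have hpos : k + 1 ≤ n → 0 < diffMC p c S (k + 1) := by
    intro hk1n
    rw [diffMC_succ p c S k hk1, heq]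
    obtain ⟨hpk0, hpk1⟩ := hp (k + 1) (by omega) hk1n
    rcases hcases with ⟨h0, hd⟩ | ⟨h1, hd⟩
    · have hSk : S k = 1 := by rw [hS k, if_pos rfl, h0]
      rw [hSk]
      push_cast
      nlinarith
    · have hSk : S k = 0 := by rw [hS k, if_pos rfl, h1]
      rw [hSk]
      push_cast
      nlinarith
  have hneg : ∀ m, k + 2 ≤ m → m ≤ n → diffMC p c S m < 0 := by
    intro m hm
    induction m, hm using Nat.le_induction with
    | base =>
      intro hmn
      rw [diffMC_succ p c S (k + 1) (by omega), hSk1]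
      obtain ⟨hpk0, hpk1⟩ := hp (k + 2) (by omega) hmn
      have := hpos (by omega)
      push_cast
      nlinarith
    | succ m hm ih =>
      intro hmn
      rw [diffMC_succ p c S m (by omega), hS0 m hm (by omega)]
      obtain ⟨hpk0, hpk1⟩ := hp (m + 1) (by omega) hmn
      have := ih (by omega)
      push_cast
      nlinarith
  intro j hj1 hjn
  rcases eq_or_lt_of_le hj1 with hjk | hjk
  · refine ⟨by omega, hjn, Or.inr ⟨by rw [← hjk]; exact hSk1, ?_⟩⟩
    rw [← hjk]
    exact hpos (by omega)
  · exact ⟨by omega, hjn, Or.inl ⟨hS0 j (by omega) hjn, hneg j (by omega) hjn⟩⟩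
end

section
/- The following two statements hold for every k with 1 ≤ k ≤ n. (1) If a policy S satisfies S_k = 1 and S_j = 0 for all j with k+1 ≤ j ≤ n, and all of the vertices k, k+1, …, n are switchable under S, then the next 2^(n−k+1) − 1 steps of the simple policy improvement algorithm each flip a vertex in {k, …, n}, and the policy T reached after these steps satisfies T_j = 0 for all j with k ≤ j ≤ n and T_j = S_j for all j < k. (2) If a policy S satisfies S_j = 0 for all j with k ≤ j ≤ n, and all of the vertices k, k+1, …, n are switchable under S, then the next 2^(n−k+1) − 1 steps of the simple policy improvement algorithm each flip a vertex in {k, …, n}, and the policy T reached after these steps satisfies T_k = 1, T_j = 0 for all j with k+1 ≤ j ≤ n, and T_j = S_j for all j < k. -/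
/-- One step of the simple policy improvement algorithm from S to T flipping
vertex m: m is the highest-numbered switchable vertex under S, and T is S with
bit m flipped. -/
def simpleStepMC (n : ℕ) (p : ℕ → ℝ) (c : ℝ) (S T : ℕ → ℕ) (m : ℕ) : Prop :=
  switchableMC n p c S m ∧ (∀ j, switchableMC n p c S j → j ≤ m) ∧
    ∀ j, T j = if j = m then 1 - S j else S j

private lemma sum_bits_congr (S T : ℕ → ℕ) (j : ℕ)
    (h : ∀ i, 1 ≤ i → i ≤ j → T i = S i) :
    ∑ i ∈ Finset.Icc 1 j, T i = ∑ i ∈ Finset.Icc 1 j, S i :=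
  Finset.sum_congr rfl fun i hi => by
    rw [Finset.mem_Icc] at hi; exact h i hi.1 hi.2

private lemma sum_bits_update (S T : ℕ → ℕ) (a j : ℕ)
    (h : ∀ i, 1 ≤ i → i ≤ j → i ≠ a → T i = S i) (ha1 : 1 ≤ a) (haj : a ≤ j) :
    (∑ i ∈ Finset.Icc 1 j, T i) + S a = (∑ i ∈ Finset.Icc 1 j, S i) + T a := by
  have hmem : a ∈ Finset.Icc 1 j := Finset.mem_Icc.2 ⟨ha1, haj⟩
  rw [← Finset.add_sum_erase _ T hmem, ← Finset.add_sum_erase _ S hmem]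
  have heq : ∑ i ∈ (Finset.Icc 1 j).erase a, T i
      = ∑ i ∈ (Finset.Icc 1 j).erase a, S i := by
    refine Finset.sum_congr rfl fun i hi => ?_
    have hia := Finset.ne_of_mem_erase hi
    have hmem' := Finset.mem_of_mem_erase hi
    rw [Finset.mem_Icc] at hmem'
    exact h i hmem'.1 hmem'.2 hia
  rw [heq]; ring

private lemma diffMC_sign (n : ℕ) (p : ℕ → ℝ) (c : ℝ)
    (hp : ∀ i, 1 ≤ i → i ≤ n → p i ∈ Set.Ioo (0 : ℝ) 1) (hc : 0 < c)
    (S : ℕ → ℕ) (hS : ∀ i, S i ≤ 1) :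
    ∀ j, 1 ≤ j → j ≤ n →
      (diffMC p c S j < 0 ↔ Even (∑ i ∈ Finset.Icc 1 (j - 1), S i)) ∧
      (0 < diffMC p c S j ↔ ¬ Even (∑ i ∈ Finset.Icc 1 (j - 1), S i)) := by
  intro j
  induction j with
  | zero => intro h; omega
  | succ j ih =>
    intro _ hjn
    rcases Nat.eq_zero_or_pos j with rfl | hj
    · have hp1 := hp 1 le_rfl hjn
      have hd : diffMC p c S 1 = -(p 1) * c := by
        simp [diffMC]
      have hneg : diffMC p c S 1 < 0 := by
        rw [hd]; nlinarith [hp1.1]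
      constructor
      · exact iff_of_true hneg (by simp)
      · exact iff_of_false (by linarith) (by simp)
    · have hjn' : j ≤ n := by omega
      obtain ⟨ih1, ih2⟩ := ih hj hjn'
      have hstep : diffMC p c S (j + 1)
          = diffMC p c S j * (p (j + 1) - (S j : ℝ)) := by
        unfold diffMC
        rw [Finset.prod_Icc_succ_top (by omega : 2 ≤ j + 1)]
        simp only [Nat.add_sub_cancel]
        ring
      have hsum : (∑ i ∈ Finset.Icc 1 (j + 1 - 1), S i)
          = (∑ i ∈ Finset.Icc 1 (j - 1), S i) + S j := by
        rw [show j + 1 - 1 = (j - 1) + 1 by omega,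
          Finset.sum_Icc_succ_top (by omega : 1 ≤ (j - 1) + 1),
          show j - 1 + 1 = j by omega]
      have hpj := hp (j + 1) (by omega) hjn
      have h01 : S j = 0 ∨ S j = 1 := by have := hS j; omega
      by_cases hev : Even (∑ i ∈ Finset.Icc 1 (j - 1), S i)
      · have hdneg : diffMC p c S j < 0 := ih1.mpr hev
        rcases h01 with h0 | h0
        · have hfac : (0:ℝ) < p (j + 1) - (S j : ℝ) := by
            rw [h0]; simpa using hpj.1
          have : diffMC p c S (j + 1) < 0 := by
            rw [hstep]; exact mul_neg_of_neg_of_pos hdneg hfac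
          constructor
          · exact iff_of_true this (by rw [hsum, h0]; simpa using hev)
          · exact iff_of_false (by linarith) (by rw [hsum, h0]; simpa using hev)
        · have hfac : p (j + 1) - (S j : ℝ) < 0 := by
            rw [h0]; push_cast; linarith [hpj.2]
          have hpos : 0 < diffMC p c S (j + 1) := by
            rw [hstep]; exact mul_pos_of_neg_of_neg hdneg hfac
          have hodd : ¬ Even (∑ i ∈ Finset.Icc 1 (j + 1 - 1), S i) := by
            rw [hsum, h0, Nat.even_add_one]; simpa using hev
          constructor
          · exact iff_of_false (by linarith) (by simpa using hodd)
          · exact iff_of_true hpos hodd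
      · have hdpos : 0 < diffMC p c S j := ih2.mpr hev
        rcases h01 with h0 | h0
        · have hfac : (0:ℝ) < p (j + 1) - (S j : ℝ) := by
            rw [h0]; simpa using hpj.1
          have hpos : 0 < diffMC p c S (j + 1) := by
            rw [hstep]; exact mul_pos hdpos hfac
          have hodd : ¬ Even (∑ i ∈ Finset.Icc 1 (j + 1 - 1), S i) := by
            rw [hsum, h0]; simpa using hev
          constructor
          · exact iff_of_false (by linarith) (by simpa using hodd)
          · exact iff_of_true hpos hodd
        · have hfac : p (j + 1) - (S j : ℝ) < 0 := by
            rw [h0]; push_cast; linarith [hpj.2]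
          have hneg' : diffMC p c S (j + 1) < 0 := by
            rw [hstep]; exact mul_neg_of_pos_of_neg hdpos hfac
          have hevn : Even (∑ i ∈ Finset.Icc 1 (j + 1 - 1), S i) := by
            rw [hsum, h0, Nat.even_add_one]; simpa using hev
          constructor
          · exact iff_of_true hneg' hevn
          · exact iff_of_false (by linarith) (by simpa using hevn)

private lemma switchable_iff (n : ℕ) (p : ℕ → ℝ) (c : ℝ)
    (hp : ∀ i, 1 ≤ i → i ≤ n → p i ∈ Set.Ioo (0 : ℝ) 1) (hc : 0 < c)
    (S : ℕ → ℕ) (hS : ∀ i, S i ≤ 1)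
    (j : ℕ) (hj1 : 1 ≤ j) (hjn : j ≤ n) :
    switchableMC n p c S j ↔ Even (∑ i ∈ Finset.Icc 1 j, S i) := by
  obtain ⟨h1, h2⟩ := diffMC_sign n p c hp hc S hS j hj1 hjn
  have hsum : (∑ i ∈ Finset.Icc 1 j, S i)
      = (∑ i ∈ Finset.Icc 1 (j - 1), S i) + S j := by
    conv_lhs => rw [show j = (j - 1) + 1 by omega]
    rw [Finset.sum_Icc_succ_top (by omega : 1 ≤ (j - 1) + 1),
      show j - 1 + 1 = j by omega]
  have h01 : S j = 0 ∨ S j = 1 := by have := hS j; omega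
  unfold switchableMC
  rcases h01 with h0 | h0
  · rw [hsum, h0]
    constructor
    · rintro ⟨-, -, ⟨-, hd⟩ | ⟨h01', -⟩⟩
      · simpa using h1.mp hd
      · exact absurd h01' (by norm_num)
    · intro hev
      exact ⟨hj1, hjn, Or.inl ⟨rfl, h1.mpr (by simpa using hev)⟩⟩
  · rw [hsum, h0]
    constructor
    · rintro ⟨-, -, ⟨h01', -⟩ | ⟨-, hd⟩⟩
      · exact absurd h01' (by norm_num)
      · rw [Nat.even_add_one]; simpa using h2.mp hd
    · intro hev
      refine ⟨hj1, hjn, Or.inr ⟨rfl, h2.mpr ?_⟩⟩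
      rw [Nat.even_add_one] at hev; simpa using hev

private lemma combinePI (n : ℕ) (p : ℕ → ℝ) (c : ℝ) (k L : ℕ)
    (P1 P2 : ℕ → ℕ → ℕ) (m1 m2 : ℕ → ℕ)
    (h1 : ∀ t, t < L → simpleStepMC n p c (P1 t) (P1 (t + 1)) (m1 t))
    (hmid : simpleStepMC n p c (P1 L) (P2 0) k)
    (h2 : ∀ t, t < L → simpleStepMC n p c (P2 t) (P2 (t + 1)) (m2 t))
    (hb1 : ∀ t, t ≤ L → ∀ j, P1 t j ≤ 1)
    (hb2 : ∀ t, t ≤ L → ∀ j, P2 t j ≤ 1)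
    (hm1 : ∀ t, t < L → k ≤ m1 t ∧ m1 t ≤ n)
    (hm2 : ∀ t, t < L → k ≤ m2 t ∧ m2 t ≤ n)
    (hk : k ≤ n) :
    ∃ (P : ℕ → ℕ → ℕ) (m : ℕ → ℕ),
      P 0 = P1 0 ∧
      (∀ t, t ≤ 2 * L + 1 → ∀ j, P t j ≤ 1) ∧
      (∀ t, t < 2 * L + 1 → simpleStepMC n p c (P t) (P (t + 1)) (m t)) ∧
      (∀ t, t < 2 * L + 1 → k ≤ m t ∧ m t ≤ n) ∧
      P (2 * L + 1) = P2 L := by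
  refine ⟨fun t => if t ≤ L then P1 t else P2 (t - (L + 1)),
    fun t => if t < L then m1 t else if t = L then k else m2 (t - (L + 1)),
    by simp, ?_, ?_, ?_, ?_⟩
  · intro t ht j
    by_cases h : t ≤ L
    · simpa [h] using hb1 t h j
    · have : t - (L + 1) ≤ L := by omega
      simpa [h] using hb2 (t - (L + 1)) this j
  · intro t ht
    dsimp only
    rcases lt_trichotomy t L with h | h | h
    · rw [if_pos (Nat.le_of_lt h), if_pos (by omega : t + 1 ≤ L), if_pos h]
      exact h1 t h
    · subst h
      rw [if_pos (le_refl t), if_neg (by omega : ¬ t + 1 ≤ t), if_neg (lt_irrefl t),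
        if_pos rfl, show t + 1 - (t + 1) = 0 by omega]
      exact hmid
    · have e1 : (if t ≤ L then P1 t else P2 (t - (L + 1))) = P2 (t - (L + 1)) := by
        simp [Nat.not_le.2 h]
      have e2 : (if t + 1 ≤ L then P1 (t + 1) else P2 (t + 1 - (L + 1))) = P2 (t - (L + 1) + 1) := by
        rw [if_neg (by omega), show t + 1 - (L + 1) = t - (L + 1) + 1 by omega]
      have hm : (if t < L then m1 t else if t = L then k else m2 (t - (L + 1))) = m2 (t - (L + 1)) := by
        rw [if_neg (by omega), if_neg (by omega)]
      rw [e1, e2, hm]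
      exact h2 (t - (L + 1)) (by omega)
  · intro t ht
    dsimp only
    rcases lt_trichotomy t L with h | h | h
    · rw [if_pos h]; exact hm1 t h
    · rw [if_neg (by omega), if_pos h]; omega
    · have : (if t < L then m1 t else if t = L then k else m2 (t - (L + 1))) = m2 (t - (L + 1)) := by
        rw [if_neg (by omega), if_neg (by omega)]
      rw [this]
      exact hm2 (t - (L + 1)) (by omega)
  · dsimp only
    rw [if_neg (by omega : ¬ 2 * L + 1 ≤ L), show 2 * L + 1 - (L + 1) = L by omega]

private lemma mainAux (n : ℕ) (p : ℕ → ℝ) (c : ℝ)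
    (hp : ∀ i, 1 ≤ i → i ≤ n → p i ∈ Set.Ioo (0 : ℝ) 1) (hc : 0 < c) :
    ∀ d k, 1 ≤ k → k + d = n →
      ∀ S : ℕ → ℕ, (∀ j, S j ≤ 1) →
        (∀ j, k + 1 ≤ j → j ≤ n → S j = 0) →
        (∀ j, k ≤ j → j ≤ n → switchableMC n p c S j) →
        ∃ (P : ℕ → ℕ → ℕ) (m : ℕ → ℕ),
          P 0 = S ∧
          (∀ t, t ≤ 2 ^ (d + 1) - 1 → ∀ j, P t j ≤ 1) ∧
          (∀ t, t < 2 ^ (d + 1) - 1 → simpleStepMC n p c (P t) (P (t + 1)) (m t)) ∧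
          (∀ t, t < 2 ^ (d + 1) - 1 → k ≤ m t ∧ m t ≤ n) ∧
          P (2 ^ (d + 1) - 1) k = 1 - S k ∧
          (∀ j, k + 1 ≤ j → j ≤ n → P (2 ^ (d + 1) - 1) j = 0) ∧
          (∀ j, j < k → P (2 ^ (d + 1) - 1) j = S j) := by
  intro d
  induction d with
  | zero =>
    intro k hk1 hkn S hS hS0 hsw
    obtain rfl : k = n := by omega
    have hone : 2 ^ (0 + 1) - 1 = 1 := by norm_num
    rw [hone]
    refine ⟨fun t => if t = 0 then S else (fun j => if j = k then 1 - S j else S j),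
      fun _ => k, by simp, ?_, ?_, ?_, ?_, ?_, ?_⟩
    · intro t ht j
      by_cases h0 : t = 0
      · simpa [h0] using hS j
      · simp only [if_neg h0]
        split
        · omega
        · exact hS j
    · intro t ht
      obtain rfl : t = 0 := by omega
      dsimp only
      rw [if_pos rfl, if_neg (by omega : ¬ (0 : ℕ) + 1 = 0)]
      exact ⟨hsw k le_rfl le_rfl, fun j hj => hj.2.1, fun j => rfl⟩
    · intro t ht
      exact ⟨le_rfl, le_rfl⟩
    · dsimp only
      rw [if_neg (one_ne_zero), if_pos rfl]
    · intro j h1 h2; omega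
    · intro j hj
      dsimp only
      rw [if_neg (one_ne_zero), if_neg (by omega)]
  | succ d ih =>
    intro k hk1 hkn S hS hS0 hsw
    have hkn' : k + 1 ≤ n := by omega
    set L := 2 ^ (d + 1) - 1 with hLdef
    have hLpow : 2 ^ (d + 1 + 1) - 1 = 2 * L + 1 := by
      have h1 : 1 ≤ 2 ^ (d + 1) := Nat.one_le_two_pow
      have h2 : 2 ^ (d + 1 + 1) = 2 * 2 ^ (d + 1) := by ring
      omega
    have hEvenS : ∀ j, k ≤ j → j ≤ n → Even (∑ i ∈ Finset.Icc 1 j, S i) := fun j hj1 hj2 =>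
      (switchable_iff n p c hp hc S hS j (by omega) hj2).mp (hsw j hj1 hj2)
    obtain ⟨P1, m1, hP10, hb1, hstep1, hm1, hTk1, hT0, hTlow⟩ :=
      ih (k + 1) (by omega) (by omega) S hS (fun j h1 h2 => hS0 j (by omega) h2)
        (fun j h1 h2 => hsw j (by omega) h2)
    set T := P1 L with hTdef
    have hSk1 : S (k + 1) = 0 := hS0 (k + 1) le_rfl hkn'
    have hTk1' : T (k + 1) = 1 := by rw [hTk1, hSk1]
    have hTb : ∀ j, T j ≤ 1 := hb1 L le_rfl
    have hσT : ∀ j, k + 1 ≤ j → j ≤ n →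
        (∑ i ∈ Finset.Icc 1 j, T i) = (∑ i ∈ Finset.Icc 1 j, S i) + 1 := by
      intro j hj1 hj2
      have hptw : ∀ i, 1 ≤ i → i ≤ j → i ≠ k + 1 → T i = S i := by
        intro i hi1 hi2 hia
        rcases lt_or_ge i (k + 1) with h | h
        · exact hTlow i h
        · rw [hT0 i (by omega) (by omega), hS0 i (by omega) (by omega)]
      have h := sum_bits_update S T (k + 1) j hptw (by omega) hj1
      rw [hSk1, hTk1'] at h
      omega
    have hσTk : (∑ i ∈ Finset.Icc 1 k, T i) = ∑ i ∈ Finset.Icc 1 k, S i :=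
      sum_bits_congr S T k (fun i hi1 hi2 => hTlow i (by omega))
    have hTkS : T k = S k := hTlow k (by omega)
    have hswTk : switchableMC n p c T k := by
      rw [switchable_iff n p c hp hc T hTb k hk1 (by omega), hσTk]
      exact hEvenS k le_rfl (by omega)
    have hhigh : ∀ j, switchableMC n p c T j → j ≤ k := by
      intro j hj
      by_contra hjk
      have hj1 : k + 1 ≤ j := by omega
      have hjn : j ≤ n := hj.2.1
      have hev := (switchable_iff n p c hp hc T hTb j (by omega) hjn).mp hj
      rw [hσT j hj1 hjn, Nat.even_add_one] at hev
      exact hev (hEvenS j (by omega) hjn)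
    set U : ℕ → ℕ := fun j => if j = k then 1 - T j else T j with hUdef
    have hmid : simpleStepMC n p c T U k := ⟨hswTk, hhigh, fun j => rfl⟩
    have hUb : ∀ j, U j ≤ 1 := by
      intro j
      show (if j = k then 1 - T j else T j) ≤ 1
      split
      · omega
      · exact hTb j
    have hUk : U k = 1 - S k := by
      show (if k = k then 1 - T k else T k) = 1 - S k
      rw [if_pos rfl, hTkS]
    have hUk1 : U (k + 1) = 1 := by
      show (if k + 1 = k then 1 - T (k + 1) else T (k + 1)) = 1
      rw [if_neg (by omega), hTk1']
    have hU0 : ∀ j, k + 2 ≤ j → j ≤ n → U j = 0 := by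
      intro j h1 h2
      show (if j = k then 1 - T j else T j) = 0
      rw [if_neg (by omega)]; exact hT0 j h1 h2
    have hUlow : ∀ j, j < k → U j = S j := by
      intro j hj
      show (if j = k then 1 - T j else T j) = S j
      rw [if_neg (by omega)]; exact hTlow j (by omega)
    have hswU : ∀ j, k + 1 ≤ j → j ≤ n → switchableMC n p c U j := by
      intro j h1 h2
      rw [switchable_iff n p c hp hc U hUb j (by omega) h2]
      have hptw : ∀ i, 1 ≤ i → i ≤ j → i ≠ k → U i = T i := by
        intro i _ _ hik
        show (if i = k then 1 - T i else T i) = T i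
        rw [if_neg hik]
      have h := sum_bits_update T U k j hptw hk1 (by omega)
      rw [hσT j h1 h2] at h
      have hevS := hEvenS j (by omega) h2
      have hSk01 : S k = 0 ∨ S k = 1 := by have := hS k; omega
      rcases hSk01 with h0 | h0
      · rw [hTkS, h0, hUk, h0] at h
        have he : (∑ i ∈ Finset.Icc 1 j, U i) = (∑ i ∈ Finset.Icc 1 j, S i) + 2 := by omega
        rw [he, Nat.even_add]
        exact iff_of_true hevS (by decide)
      · rw [hTkS, h0, hUk, h0] at h
        have he : (∑ i ∈ Finset.Icc 1 j, U i) = (∑ i ∈ Finset.Icc 1 j, S i) := by omega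
        rw [he]
        exact hevS
    obtain ⟨P2, m2, hP20, hb2, hstep2, hm2, hVk1, hV0, hVlow⟩ :=
      ih (k + 1) (by omega) (by omega) U hUb (fun j h1 h2 => hU0 j h1 h2) hswU
    have hmid' : simpleStepMC n p c (P1 L) (P2 0) k := by
      rw [hP20]; exact hmid
    obtain ⟨P, m, hP0, hPb, hPstep, hPm, hPfin⟩ :=
      combinePI n p c k L P1 P2 m1 m2 hstep1 hmid' hstep2 hb1 hb2
        (fun t ht => ⟨by have := (hm1 t ht).1; omega, (hm1 t ht).2⟩)
        (fun t ht => ⟨by have := (hm2 t ht).1; omega, (hm2 t ht).2⟩) (by omega)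
    rw [hLpow]
    refine ⟨P, m, by rw [hP0, hP10], hPb, hPstep, hPm, ?_, ?_, ?_⟩
    · rw [hPfin, hVlow k (by omega), hUk]
    · intro j h1 h2
      rw [hPfin]
      by_cases hj : j = k + 1
      · subst hj
        rw [hVk1, hUk1]
      · exact hV0 j (by omega) h2
    · intro j hj
      rw [hPfin, hVlow j (by omega), hUlow j hj]

/-- MC Lemma 2.7 (robust version). (1) From a policy S with S_k = 1,
S_j = 0 for k+1 ≤ j ≤ n, and all of k,…,n switchable, the next 2^(n−k+1) − 1
steps of simple policy improvement are made on vertices in {k,…,n} and lead to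
the policy with bits k,…,n all 0 (and lower bits unchanged). (2) From a policy
S with S_j = 0 for k ≤ j ≤ n and all of k,…,n switchable, the next
2^(n−k+1) − 1 steps are made on vertices in {k,…,n} and lead to the policy
with bit k equal to 1 and bits k+1,…,n all 0 (and lower bits unchanged). -/
theorem simplePI_recursion (n : ℕ) (hn : 1 ≤ n)
    (p : ℕ → ℝ) (c : ℝ)
    (hp : ∀ i, 1 ≤ i → i ≤ n → p i ∈ Set.Ioo (0 : ℝ) 1) (hc : 0 < c)
    (k : ℕ) (hk1 : 1 ≤ k) (hkn : k ≤ n) :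
    ((∀ S : ℕ → ℕ, (∀ j, S j ≤ 1) →
        S k = 1 → (∀ j, k + 1 ≤ j → j ≤ n → S j = 0) →
        (∀ j, k ≤ j → j ≤ n → switchableMC n p c S j) →
        ∃ (P : ℕ → ℕ → ℕ) (m : ℕ → ℕ),
          P 0 = S ∧
          (∀ t, t < 2 ^ (n - k + 1) - 1 →
            simpleStepMC n p c (P t) (P (t + 1)) (m t)) ∧
          (∀ t, t < 2 ^ (n - k + 1) - 1 → k ≤ m t ∧ m t ≤ n) ∧
          (∀ j, k ≤ j → j ≤ n → P (2 ^ (n - k + 1) - 1) j = 0) ∧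
          (∀ j, j < k → P (2 ^ (n - k + 1) - 1) j = S j)) ∧
     (∀ S : ℕ → ℕ, (∀ j, S j ≤ 1) →
        (∀ j, k ≤ j → j ≤ n → S j = 0) →
        (∀ j, k ≤ j → j ≤ n → switchableMC n p c S j) →
        ∃ (P : ℕ → ℕ → ℕ) (m : ℕ → ℕ),
          P 0 = S ∧
          (∀ t, t < 2 ^ (n - k + 1) - 1 →
            simpleStepMC n p c (P t) (P (t + 1)) (m t)) ∧
          (∀ t, t < 2 ^ (n - k + 1) - 1 → k ≤ m t ∧ m t ≤ n) ∧
          P (2 ^ (n - k + 1) - 1) k = 1 ∧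
          (∀ j, k + 1 ≤ j → j ≤ n → P (2 ^ (n - k + 1) - 1) j = 0) ∧
          (∀ j, j < k → P (2 ^ (n - k + 1) - 1) j = S j))) := by
  constructor
  · intro S hS hSk hS0 hsw
    obtain ⟨P, m, h0, hb, hstep, hm, hfk, hf0, hflow⟩ :=
      mainAux n p c hp hc (n - k) k hk1 (by omega) S hS hS0 hsw
    refine ⟨P, m, h0, hstep, hm, ?_, hflow⟩
    intro j h1 h2
    by_cases hj : j = k
    · subst hj
      rw [hfk, hSk]
    · exact hf0 j (by omega) h2
  · intro S hS hS0 hsw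
    obtain ⟨P, m, h0, hb, hstep, hm, hfk, hf0, hflow⟩ :=
      mainAux n p c hp hc (n - k) k hk1 (by omega) S hS
        (fun j h1 h2 => hS0 j (by omega) h2) hsw
    refine ⟨P, m, h0, hstep, hm, ?_, hf0, hflow⟩
    rw [hfk, hS0 k le_rfl hkn]
end

section
/- Starting from the all-zero policy (S_j = 0 for all 1 ≤ j ≤ n), the simple policy improvement algorithm performs exactly 2^n − 1 steps before reaching a policy with no switchable vertex, and the terminal policy satisfies S_1 = 1 and S_j = 0 for all 2 ≤ j ≤ n. In particular this holds for every choice of probabilities p_1, …, p_n in the open interval (0,1) and every cost c > 0. -/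
open Finset

lemma neg_one_pow_mul_sub_pos {x : ℝ} (hx : x ∈ Set.Ioo 0 1) {s : ℕ} (hs : s ≤ 1) :
    0 < (-1) ^ s * (x - s) := by
  interval_cases s
  · simpa using hx.1
  · simpa using hx.2

lemma neg_one_pow_mul_neg_diffMC_pos {k : ℕ} {p : ℕ → ℝ} {c : ℝ} {S : ℕ → ℕ} (hp1 : 0 < p 1)
    (hc : 0 < c) (hp : ∀ i ∈ Icc 2 k, p i ∈ Set.Ioo 0 1) (hS : ∀ i, S i ≤ 1) :
    0 < (-1) ^ (∑ i ∈ Icc 2 k, S (i - 1)) * -diffMC p c S k := by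
  rw [diffMC, ← prod_pow_eq_pow_sum, neg_mul, neg_mul, neg_neg, mul_left_comm,
    ← prod_mul_distrib]
  exact mul_pos (mul_pos hp1 hc)
    (prod_pos fun i hi => neg_one_pow_mul_sub_pos (hp i hi) (hS _))

lemma sum_Icc_one_eq_sum_Icc_two_pred_add (S : ℕ → ℕ) {k : ℕ} (hk : 1 ≤ k) :
    ∑ i ∈ Icc 1 k, S i = ∑ i ∈ Icc 2 k, S (i - 1) + S k := by
  induction k, hk using Nat.le_induction with
  | base => simp
  | succ k hk ih =>
    rw [sum_Icc_succ_top (by omega), sum_Icc_succ_top (show 2 ≤ k + 1 by omega), ih]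
    simp

lemma switchableMC_iff_even {n : ℕ} {p : ℕ → ℝ} {c : ℝ} {S : ℕ → ℕ}
    (hp : ∀ i, 1 ≤ i → i ≤ n → p i ∈ Set.Ioo (0 : ℝ) 1) (hc : 0 < c) (hS : ∀ i, S i ≤ 1)
    (k : ℕ) : switchableMC n p c S k ↔ 1 ≤ k ∧ k ≤ n ∧ Even (∑ i ∈ Icc 1 k, S i) := by
  refine and_congr_right fun hk1 => and_congr_right fun hkn => ?_
  have hsign := neg_one_pow_mul_neg_diffMC_pos (k := k) (S := S) (hp 1 le_rfl (hk1.trans hkn)).1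
    hc (fun i hi => have := mem_Icc.mp hi; hp i (by omega) (by omega)) hS
  rw [sum_Icc_one_eq_sum_Icc_two_pred_add S hk1]
  rcases Nat.even_or_odd (∑ i ∈ Icc 2 k, S (i - 1)) with h | h <;>
    rcases Nat.le_one_iff_eq_zero_or_eq_one.mp (hS k) with hSk | hSk <;>
    simp only [h.neg_one_pow, one_mul, neg_one_mul, neg_neg, Left.neg_pos_iff] at hsign <;>
    simp [hSk, h, hsign, hsign.le, Nat.even_add_one, ← Nat.not_odd_iff_even]

namespace Nat

variable {t e q : ℕ}

lemma testBit_of_add_one_eq_two_pow_mul (h : t + 1 = 2 ^ e * (2 * q + 1)) (i : ℕ) :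
    t.testBit i = if i < e + 1 then decide (i < e) else q.testBit (i - (e + 1)) := by
  have hpos := Nat.two_pow_pos e
  have ht : t = 2 ^ (e + 1) * q + (2 ^ e - 1) := by rw [pow_succ]; grind
  have hlt : 2 ^ e - 1 < 2 ^ (e + 1) := by rw [pow_succ]; omega
  rw [ht, testBit_two_pow_mul_add q hlt, testBit_two_pow_sub_one]

lemma testBit_add_one_of_add_one_eq_two_pow_mul (h : t + 1 = 2 ^ e * (2 * q + 1)) (i : ℕ) :
    (t + 1).testBit i = (t.testBit i ^^ decide (i ≤ e)) := by
  have ht : t + 1 = 2 ^ (e + 1) * q + 2 ^ e := by rw [h, pow_succ]; ring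
  rw [ht, testBit_two_pow_mul_add q (Nat.pow_lt_pow_succ one_lt_two), testBit_two_pow,
    testBit_of_add_one_eq_two_pow_mul h]
  split_ifs <;> grind

end Nat

def grayCode (t : ℕ) : ℕ := t ^^^ t >>> 1

lemma testBit_grayCode (t i : ℕ) :
    (grayCode t).testBit i = (t.testBit i ^^ t.testBit (i + 1)) := by
  rw [grayCode, Nat.testBit_xor, Nat.testBit_shiftRight, add_comm 1]

lemma testBit_grayCode_add_one {t e q : ℕ} (h : t + 1 = 2 ^ e * (2 * q + 1)) (i : ℕ) :
    (grayCode (t + 1)).testBit i = ((grayCode t).testBit i ^^ decide (i = e)) := by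
  simp only [testBit_grayCode, Nat.testBit_add_one_of_add_one_eq_two_pow_mul h]
  grind

def grayPolicy (n t j : ℕ) : ℕ :=
  if 1 ≤ j ∧ j ≤ n then ((grayCode t).testBit (n - j)).toNat else 0

lemma grayPolicy_le_one (n t j : ℕ) : grayPolicy n t j ≤ 1 := by
  unfold grayPolicy; split_ifs <;> simp [Bool.toNat_le]

lemma even_sum_grayPolicy_iff (n t : ℕ) {k : ℕ} (hk : k ≤ n) :
    Even (∑ i ∈ Icc 1 k, grayPolicy n t i) ↔ t.testBit (n - k) = t.testBit n := by
  induction k with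
  | zero => simp
  | succ k ih =>
    rw [sum_Icc_succ_top (by omega), Nat.even_add, ih (by omega), grayPolicy,
      if_pos ⟨by omega, hk⟩, testBit_grayCode, show n - (k + 1) + 1 = n - k by omega]
    cases t.testBit (n - (k + 1)) <;> cases t.testBit (n - k) <;> cases t.testBit n <;> simp

lemma grayPolicy_add_one {n t e q : ℕ} (h : t + 1 = 2 ^ e * (2 * q + 1)) (he : e < n) (j : ℕ) :
    grayPolicy n (t + 1) j = if j = n - e then 1 - grayPolicy n t j else grayPolicy n t j := by
  unfold grayPolicy
  split_ifs with hj hj' <;> try omega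
  all_goals rw [testBit_grayCode_add_one h]
  · rw [show n - j = e by omega]
    cases (grayCode t).testBit e <;> simp
  · simp [show n - j ≠ e by omega]

lemma switchableMC_grayPolicy_iff {n : ℕ} {p : ℕ → ℝ} {c : ℝ}
    (hp : ∀ i, 1 ≤ i → i ≤ n → p i ∈ Set.Ioo (0 : ℝ) 1) (hc : 0 < c) {t : ℕ} (ht : t < 2 ^ n)
    (k : ℕ) :
    switchableMC n p c (grayPolicy n t) k ↔ 1 ≤ k ∧ k ≤ n ∧ t.testBit (n - k) = false := by
  rw [switchableMC_iff_even hp hc (grayPolicy_le_one n t)]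
  refine and_congr_right fun _ => and_congr_right fun hkn => ?_
  rw [even_sum_grayPolicy_iff n t hkn, Nat.testBit_lt_two_pow ht]

lemma exists_simpleStepMC_grayPolicy {n : ℕ} {p : ℕ → ℝ} {c : ℝ}
    (hp : ∀ i, 1 ≤ i → i ≤ n → p i ∈ Set.Ioo (0 : ℝ) 1) (hc : 0 < c) {t : ℕ}
    (ht : t + 1 < 2 ^ n) : ∃ m, simpleStepMC n p c (grayPolicy n t) (grayPolicy n (t + 1)) m := by
  obtain ⟨e, _, ⟨q, rfl⟩, h⟩ := Nat.exists_eq_two_pow_mul_odd t.add_one_ne_zero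
  have he : e < n := by
    have : 2 ^ e < 2 ^ n := lt_of_le_of_lt (h ▸ Nat.le_mul_of_pos_right _ (by omega)) ht
    exact (Nat.pow_lt_pow_iff_right (by norm_num)).mp this
  have hbit := Nat.testBit_of_add_one_eq_two_pow_mul h
  refine ⟨n - e, ?_, fun j hj => ?_, grayPolicy_add_one h he⟩
  · rw [switchableMC_grayPolicy_iff hp hc (by omega)]
    refine ⟨by omega, Nat.sub_le n e, ?_⟩
    rw [show n - (n - e) = e by omega, hbit, if_pos e.lt_add_one, decide_eq_false (lt_irrefl e)]
  · rw [switchableMC_grayPolicy_iff hp hc (by omega)] at hj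
    obtain ⟨_, _, hj⟩ := hj
    by_contra hlt
    rw [hbit, if_pos (by omega), decide_eq_false_iff_not] at hj
    omega

lemma grayPolicy_zero (n : ℕ) : grayPolicy n 0 = fun _ => 0 := by
  funext j
  simp [grayPolicy, grayCode]

lemma grayPolicy_two_pow_sub_one {n : ℕ} (hn : 1 ≤ n) (j : ℕ) :
    grayPolicy n (2 ^ n - 1) j = if j = 1 then 1 else 0 := by
  unfold grayPolicy
  split_ifs with hj hj1 hj1
  · simp [testBit_grayCode, hj1, show n - 1 + 1 = n by omega, show 0 < n from hn]
  · simp [testBit_grayCode, show n - j + 1 < n by omega, show 0 < n from hn,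
      show 0 < j by omega]
  · omega
  · rfl

lemma not_switchableMC_grayPolicy_two_pow_sub_one {n : ℕ} {p : ℕ → ℝ} {c : ℝ}
    (hp : ∀ i, 1 ≤ i → i ≤ n → p i ∈ Set.Ioo (0 : ℝ) 1) (hc : 0 < c) (j : ℕ) :
    ¬ switchableMC n p c (grayPolicy n (2 ^ n - 1)) j := by
  rw [switchableMC_grayPolicy_iff hp hc (Nat.sub_lt (Nat.two_pow_pos n) one_pos),
    Nat.testBit_two_pow_sub_one]
  grind

/-- Exponential lower bound for Simple PI on the basic graph, robust under any
probabilities in (0,1) and any positive cost: starting from the all-zero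
policy, the simple policy improvement algorithm performs exactly 2^n − 1 steps
before reaching a policy with no switchable vertex, and the terminal policy
has S_1 = 1 and S_j = 0 for all 2 ≤ j ≤ n. -/
theorem simplePI_exponential (n : ℕ) (hn : 1 ≤ n)
    (p : ℕ → ℝ) (c : ℝ)
    (hp : ∀ i, 1 ≤ i → i ≤ n → p i ∈ Set.Ioo (0 : ℝ) 1) (hc : 0 < c) :
    ∃ (P : ℕ → ℕ → ℕ) (m : ℕ → ℕ),
      P 0 = (fun _ => 0) ∧
      (∀ t, t < 2 ^ n - 1 → simpleStepMC n p c (P t) (P (t + 1)) (m t)) ∧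
      (∀ j, ¬ switchableMC n p c (P (2 ^ n - 1)) j) ∧
      P (2 ^ n - 1) 1 = 1 ∧
      (∀ j, 2 ≤ j → j ≤ n → P (2 ^ n - 1) j = 0) := by
  have hstep (t : ℕ) :
      ∃ m, t < 2 ^ n - 1 → simpleStepMC n p c (grayPolicy n t) (grayPolicy n (t + 1)) m := by
    by_cases ht : t < 2 ^ n - 1
    · obtain ⟨m, hm⟩ := exists_simpleStepMC_grayPolicy hp hc (t := t) (by omega)
      exact ⟨m, fun _ => hm⟩
    · exact ⟨0, fun h => absurd h ht⟩
  choose m hm using hstep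
  refine ⟨grayPolicy n, m, grayPolicy_zero n, hm,
    not_switchableMC_grayPolicy_two_pow_sub_one hp hc, ?_, fun j hj2 _ => ?_⟩
  · simp [grayPolicy_two_pow_sub_one hn]
  · simp [grayPolicy_two_pow_sub_one hn, show j ≠ 1 by omega]
end

section
/- Let n ≥ 1 be an integer. For each integer j ≥ 1 set p_j = 2^(−400j²), and let δ_0 = 0 and, for each j ≥ 1, let δ_j be a real with δ_j ∈ [2^(−200n+2j), 2^(−200n+2j+1)]. Then for all integers j, j_1, j_2 with 0 ≤ j < j_1 < j_2: p_{j_2}·(δ_{j_2} − δ_j) < p_{j_1}·(δ_{j_1} − δ_j). -/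
/-- Core of the reachability-parameter version of Proposition 9: with
p_j = 2^(−400j²), δ_0 = 0 and δ_j ∈ [2^(−200n+2j), 2^(−200n+2j+1)] for j ≥ 1,
the appeal increments p_{j'}·(δ_{j'} − δ_j) are strictly decreasing in j' for
j' > j, so a bit increments its action by exactly one in each phase. -/
theorem reachability_appeal_decreasing (n : ℕ) (hn : 1 ≤ n)
    (p δ : ℕ → ℝ)
    (hp : ∀ j : ℕ, 1 ≤ j → p j = (2 : ℝ) ^ (-(400 * (j : ℤ) ^ 2)))
    (hδ0 : δ 0 = 0)
    (hδ : ∀ j : ℕ, 1 ≤ j →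
      δ j ∈ Set.Icc ((2 : ℝ) ^ (-(200 * (n : ℤ)) + 2 * (j : ℤ)))
        ((2 : ℝ) ^ (-(200 * (n : ℤ)) + 2 * (j : ℤ) + 1))) :
    ∀ j j₁ j₂ : ℕ, j < j₁ → j₁ < j₂ →
      p j₂ * (δ j₂ - δ j) < p j₁ * (δ j₁ - δ j) := by
  intro j j₁ j₂ h1 h2
  have hj₁ : 1 ≤ j₁ := by omega
  have hj₂ : 1 ≤ j₂ := by omega
  have h2pos : (0:ℝ) < 2 := by norm_num
  have hpj₁ := hp j₁ hj₁
  have hpj₂ := hp j₂ hj₂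
  obtain ⟨hδ1l, hδ1u⟩ := hδ j₁ hj₁
  obtain ⟨hδ2l, hδ2u⟩ := hδ j₂ hj₂
  have hp1pos : 0 < p j₁ := by rw [hpj₁]; exact zpow_pos h2pos _
  have hp2pos : 0 < p j₂ := by rw [hpj₂]; exact zpow_pos h2pos _
  -- δ j is nonnegative and at most 2^(-(200n)+2j₁-1)
  have hδjnn : 0 ≤ δ j := by
    rcases Nat.eq_zero_or_pos j with h | h
    · rw [h, hδ0]
    · exact le_trans (le_of_lt (zpow_pos h2pos _)) (hδ j h).1
  have hδj_le : δ j ≤ (2:ℝ) ^ (-(200 * (n:ℤ)) + 2 * (j₁:ℤ) - 1) := by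
    rcases Nat.eq_zero_or_pos j with h | h
    · rw [h, hδ0]; positivity
    · refine le_trans (hδ j h).2 ?_
      apply zpow_le_zpow_right₀ (by norm_num : (1:ℝ) ≤ 2)
      have : (j:ℤ) + 1 ≤ (j₁:ℤ) := by exact_mod_cast h1
      omega
  -- lower bound for δ j₁ - δ j
  have hsplit : (2:ℝ) ^ (-(200*(n:ℤ)) + 2*(j₁:ℤ))
      = (2:ℝ) ^ (-(200*(n:ℤ)) + 2*(j₁:ℤ) - 1) + (2:ℝ) ^ (-(200*(n:ℤ)) + 2*(j₁:ℤ) - 1) := by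
    rw [← two_mul, show -(200*(n:ℤ)) + 2*(j₁:ℤ) = (-(200*(n:ℤ)) + 2*(j₁:ℤ) - 1) + 1 by ring,
      zpow_add_one₀ (two_ne_zero : (2:ℝ) ≠ 0)]
    ring
  have key1 : (2:ℝ) ^ (-(200*(n:ℤ)) + 2*(j₁:ℤ) - 1) ≤ δ j₁ - δ j := by
    linarith [hδ1l, hδj_le]
  -- exponent inequality
  have hij : (j₁:ℤ) < (j₂:ℤ) := by exact_mod_cast h2
  have hij1 : (1:ℤ) ≤ (j₁:ℤ) := by exact_mod_cast hj₁
  have hexp : -(400 * (j₂:ℤ)^2) + (-(200*(n:ℤ)) + 2*(j₂:ℤ) + 1)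
      < -(400 * (j₁:ℤ)^2) + (-(200*(n:ℤ)) + 2*(j₁:ℤ) - 1) := by
    nlinarith [mul_le_mul_of_nonneg_left (by linarith : (j₁:ℤ) + j₂ ≥ 2*(j₁:ℤ)+1)
      (by linarith : (0:ℤ) ≤ (j₂:ℤ) - j₁),
      mul_le_mul_of_nonneg_right (by linarith : (1:ℤ) ≤ (j₂:ℤ) - j₁)
      (by linarith : (0:ℤ) ≤ 2*(j₁:ℤ)+1)]
  calc p j₂ * (δ j₂ - δ j)
      ≤ p j₂ * δ j₂ := by nlinarith
    _ ≤ (2:ℝ) ^ (-(400 * (j₂:ℤ)^2)) * (2:ℝ) ^ (-(200*(n:ℤ)) + 2*(j₂:ℤ) + 1) := by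
        rw [hpj₂] at hp2pos ⊢
        exact mul_le_mul_of_nonneg_left hδ2u (le_of_lt hp2pos)
    _ = (2:ℝ) ^ (-(400 * (j₂:ℤ)^2) + (-(200*(n:ℤ)) + 2*(j₂:ℤ) + 1)) :=
        (zpow_add₀ (two_ne_zero : (2:ℝ) ≠ 0) _ _).symm
    _ < (2:ℝ) ^ (-(400 * (j₁:ℤ)^2) + (-(200*(n:ℤ)) + 2*(j₁:ℤ) - 1)) := by
        exact zpow_lt_zpow_right₀ (by norm_num) hexp
    _ = (2:ℝ) ^ (-(400 * (j₁:ℤ)^2)) * (2:ℝ) ^ (-(200*(n:ℤ)) + 2*(j₁:ℤ) - 1) :=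
        zpow_add₀ (two_ne_zero : (2:ℝ) ≠ 0) _ _
    _ ≤ p j₁ * (δ j₁ - δ j) := by
        rw [hpj₁]
        exact mul_le_mul_of_nonneg_left key1 (le_of_lt (zpow_pos h2pos _))
end

section
/- Let n ≥ 17 be an integer. Let δ_0 = 0 and, for 1 ≤ j ≤ 6n+3, let δ_j be a real with δ_j ∈ [2j/(4n²), (2j+1)/(4n²)], and let p_j be a real with p_j ∈ [n^(−(4j+3)), n^(−(4j+1))]. Then for all integers j, j_1, j_2 with 0 ≤ j < j_1 < j_2 ≤ 6n+3: p_{j_2}·(δ_{j_2} − δ_j) < p_{j_1}·(δ_{j_1} − δ_j). -/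
/-- Core of the robust version of Proposition 9: with effective small rewards
δ_0 = 0, δ_j ∈ [2j/(4n²), (2j+1)/(4n²)] and effective probabilities
p_j ∈ [n^(−(4j+3)), n^(−(4j+1))] for 1 ≤ j ≤ 6n+3, the appeal increments
p_{j'}·(δ_{j'} − δ_j) are strictly decreasing in j' for j' > j, so a bit
increments its action by exactly one in each phase. -/
theorem robust_appeal_decreasing (n : ℕ) (hn : 17 ≤ n)
    (p δ : ℕ → ℝ)
    (hδ0 : δ 0 = 0)
    (hδ : ∀ j : ℕ, 1 ≤ j → j ≤ 6 * n + 3 →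
      δ j ∈ Set.Icc ((2 * (j : ℝ)) / (4 * (n : ℝ) ^ 2))
        ((2 * (j : ℝ) + 1) / (4 * (n : ℝ) ^ 2)))
    (hp : ∀ j : ℕ, 1 ≤ j → j ≤ 6 * n + 3 →
      p j ∈ Set.Icc ((n : ℝ) ^ (-(4 * (j : ℤ) + 3))) ((n : ℝ) ^ (-(4 * (j : ℤ) + 1)))) :
    ∀ j j₁ j₂ : ℕ, j < j₁ → j₁ < j₂ → j₂ ≤ 6 * n + 3 →
      p j₂ * (δ j₂ - δ j) < p j₁ * (δ j₁ - δ j) := by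
  intro j j₁ j₂ h1 h2 h3
  have hN : (17 : ℝ) ≤ (n : ℝ) := by exact_mod_cast hn
  have hN0 : (0 : ℝ) < (n : ℝ) := by linarith
  have hN1 : (1 : ℝ) < (n : ℝ) := by linarith
  have h4 : (0 : ℝ) < 4 * (n : ℝ) ^ 2 := by positivity
  -- extended δ bounds including j = 0
  have hδ' : ∀ k : ℕ, k ≤ 6 * n + 3 →
      (2 * (k : ℝ)) / (4 * (n : ℝ) ^ 2) ≤ δ k ∧
      δ k ≤ (2 * (k : ℝ) + 1) / (4 * (n : ℝ) ^ 2) := by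
    intro k hk
    rcases Nat.eq_zero_or_pos k with h | h
    · subst h
      refine ⟨?_, ?_⟩
      · rw [hδ0]; simp
      · rw [hδ0]; positivity
    · exact hδ k h hk
  have hj1le : j₁ ≤ 6 * n + 3 := le_of_lt (lt_of_lt_of_le h2 h3)
  have hj1ge : 1 ≤ j₁ := Nat.one_le_of_lt (Nat.lt_of_le_of_lt (Nat.zero_le j) h1)
  have hj2ge : 1 ≤ j₂ := le_of_lt (lt_of_le_of_lt hj1ge h2)
  obtain ⟨hp1l, hp1u⟩ := hp j₁ hj1ge hj1le
  obtain ⟨hp2l, hp2u⟩ := hp j₂ hj2ge h3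
  obtain ⟨hdjl, hdju⟩ := hδ' j (le_of_lt (lt_of_lt_of_le (lt_trans h1 h2) h3))
  obtain ⟨hd1l, hd1u⟩ := hδ' j₁ hj1le
  obtain ⟨hd2l, hd2u⟩ := hδ' j₂ h3
  have hp2pos : (0 : ℝ) < p j₂ := lt_of_lt_of_le (by positivity) hp2l
  have hδjnn : (0 : ℝ) ≤ δ j := le_trans (by positivity) hdjl
  set a : ℝ := (n : ℝ) ^ (-(4 * (j₂ : ℤ) + 1)) with ha
  set b : ℝ := (n : ℝ) ^ (-(4 * (j₁ : ℤ) + 3)) with hb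
  have hapos : (0 : ℝ) < a := zpow_pos hN0 _
  have hbpos : (0 : ℝ) < b := zpow_pos hN0 _
  -- key: a * n² ≤ b
  have hz : a * (n : ℝ) ^ 2 ≤ b := by
    have : a * (n : ℝ) ^ 2 = (n : ℝ) ^ (-(4 * (j₂ : ℤ) + 1) + 2) := by
      rw [ha, ← zpow_natCast ((n : ℝ)) 2, ← zpow_add₀ (ne_of_gt hN0)]
      norm_num
    rw [this, hb]
    apply zpow_le_zpow_right₀ (le_of_lt hN1)
    have : (j₁ : ℤ) + 1 ≤ (j₂ : ℤ) := by exact_mod_cast h2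
    linarith
  have hj2N : 2 * (j₂ : ℝ) + 1 < (n : ℝ) ^ 2 := by
    have : (j₂ : ℝ) ≤ 6 * (n : ℝ) + 3 := by exact_mod_cast h3
    nlinarith
  -- upper bound for LHS
  have hL : p j₂ * (δ j₂ - δ j) ≤ a * ((2 * (j₂ : ℝ) + 1) / (4 * (n : ℝ) ^ 2)) := by
    have hd : δ j₂ - δ j ≤ (2 * (j₂ : ℝ) + 1) / (4 * (n : ℝ) ^ 2) := by linarith
    have hdd : (0 : ℝ) ≤ (2 * (j₂ : ℝ) + 1) / (4 * (n : ℝ) ^ 2) := by positivity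
    calc p j₂ * (δ j₂ - δ j) ≤ p j₂ * ((2 * (j₂ : ℝ) + 1) / (4 * (n : ℝ) ^ 2)) :=
          mul_le_mul_of_nonneg_left hd (le_of_lt hp2pos)
      _ ≤ a * ((2 * (j₂ : ℝ) + 1) / (4 * (n : ℝ) ^ 2)) :=
          mul_le_mul_of_nonneg_right hp2u hdd
  -- lower bound for RHS
  have hR : b * (1 / (4 * (n : ℝ) ^ 2)) ≤ p j₁ * (δ j₁ - δ j) := by
    have hd : (1 : ℝ) / (4 * (n : ℝ) ^ 2) ≤ δ j₁ - δ j := by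
      have hcast : (j : ℝ) + 1 ≤ (j₁ : ℝ) := by exact_mod_cast h1
      have : (1 : ℝ) / (4 * (n : ℝ) ^ 2) ≤
          (2 * (j₁ : ℝ)) / (4 * (n : ℝ) ^ 2) - (2 * (j : ℝ) + 1) / (4 * (n : ℝ) ^ 2) := by
        rw [div_sub_div_same, div_le_div_iff₀ (by positivity) h4]
        nlinarith
      linarith
    have hp1pos : (0 : ℝ) ≤ p j₁ := le_trans (le_of_lt hbpos) hp1l
    calc b * (1 / (4 * (n : ℝ) ^ 2)) ≤ p j₁ * (1 / (4 * (n : ℝ) ^ 2)) :=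
          mul_le_mul_of_nonneg_right hp1l (by positivity)
      _ ≤ p j₁ * (δ j₁ - δ j) := mul_le_mul_of_nonneg_left hd hp1pos
  -- strict middle inequality
  have hM : a * ((2 * (j₂ : ℝ) + 1) / (4 * (n : ℝ) ^ 2)) < b * (1 / (4 * (n : ℝ) ^ 2)) := by
    have h1' : a * (2 * (j₂ : ℝ) + 1) < b := by
      calc a * (2 * (j₂ : ℝ) + 1) < a * (n : ℝ) ^ 2 :=
            (mul_lt_mul_iff_right₀ hapos).mpr hj2N
        _ ≤ b := hz
    calc a * ((2 * (j₂ : ℝ) + 1) / (4 * (n : ℝ) ^ 2))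
        = (a * (2 * (j₂ : ℝ) + 1)) / (4 * (n : ℝ) ^ 2) := by ring
      _ < b / (4 * (n : ℝ) ^ 2) := by gcongr
      _ = b * (1 / (4 * (n : ℝ) ^ 2)) := by ring
  linarith
end

section
/- For each integer n ≥ 3 define f_n : {1,…,n} → ℕ by f_n(n) = 0 and, for 1 ≤ k < n, f_n(k) = ⌈log((1/2)^{f_n(k+1)} · (1/3)) / log(1/2 + 1/n)⌉. Then there exist constants C > 0 and c > 0 such that for all integers n ≥ 3 and all k with 1 ≤ k ≤ n: f_n(k) ≤ C·n^c. -/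
/-- Auxiliary recursion for the gadget sizes in the difference policy iteration
lower bound: `fGadgetAux n m` is the gadget size at distance m from the top
vertex n, i.e. f_n(n − m). -/
noncomputable def fGadgetAux (n : ℕ) : ℕ → ℕ
  | 0 => 0
  | m + 1 =>
      ⌈Real.log ((1 / 2 : ℝ) ^ (fGadgetAux n m) * (1 / 3)) /
        Real.log (1 / 2 + 1 / (n : ℝ))⌉₊

/-- The gadget size f_n(k) for 1 ≤ k ≤ n: f_n(n) = 0 and
f_n(k) = ⌈log((1/2)^{f_n(k+1)} · (1/3)) / log(1/2 + 1/n)⌉ for 1 ≤ k < n. -/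
noncomputable def fGadget (n k : ℕ) : ℕ := fGadgetAux n (n - k)

/-!
Write `D = -log (1/2 + 1/n)`; for `n ≥ 3` it lies in `[1/6, log 2]`. The recursion reads
`f (m+1) = ⌈(f m · log 2 + log 3) / D⌉ ≤ r · f m + b` with `r = log 2 / D ≥ 1` and
`b = log 3 / D + 1 ≤ 13`, hence `f m ≤ m · b · r ^ m`. The point is that the growth rate is only
`r = 1 + O(1/n)`: `log 2 - D = log (1 + 2/n) ≤ 2/n`, so `r ≤ 1 + 12/n` and `r ^ n ≤ e ^ 12`.
Thus every `f_n(k)` is at most `13 e¹² n`.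
-/

open Real

lemma le_natCast_mul_mul_pow_of_le_mul_add {x : ℕ → ℝ} {r b : ℝ} (h0 : x 0 ≤ 0) (hr : 1 ≤ r)
    (hb : 0 ≤ b) (hstep : ∀ m, x (m + 1) ≤ r * x m + b) (m : ℕ) :
    x m ≤ m * b * r ^ m := by
  induction m with
  | zero => simpa using h0
  | succ m ih =>
    have hb_le : b ≤ b * r ^ (m + 1) := le_mul_of_one_le_right hb (one_le_pow₀ hr)
    calc x (m + 1) ≤ r * (m * b * r ^ m) + b :=
          (hstep m).trans (by gcongr)
      _ ≤ (m + 1 : ℕ) * b * r ^ (m + 1) := by rw [pow_succ] at hb_le ⊢; push_cast; linarith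

lemma natCeil_log_div_le {ℓ : ℝ} (hℓ : ℓ ≤ 0) (a : ℕ) :
    (⌈log ((1 / 2) ^ a * (1 / 3)) / ℓ⌉₊ : ℝ) ≤ log 2 / -ℓ * a + (log 3 / -ℓ + 1) := by
  have hlog : log ((1 / 2 : ℝ) ^ a * (1 / 3)) = -(a * log 2 + log 3) := by
    rw [log_mul (by positivity) (by norm_num), log_pow, one_div, one_div, log_inv, log_inv]
    ring
  have hnonneg : 0 ≤ log ((1 / 2 : ℝ) ^ a * (1 / 3)) / ℓ := by
    have := log_pos one_lt_two
    have := log_pos (by norm_num : (1 : ℝ) < 3)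
    rw [hlog]
    exact div_nonneg_of_nonpos (neg_nonpos.mpr (by positivity)) hℓ
  have hquot : log ((1 / 2 : ℝ) ^ a * (1 / 3)) / ℓ = log 2 / -ℓ * a + log 3 / -ℓ := by
    rw [hlog, ← neg_div_neg_eq, neg_neg]
    ring
  have := Nat.ceil_lt_add_one hnonneg
  rw [hquot] at this ⊢
  linarith

noncomputable def gadgetDecay (n : ℕ) : ℝ := -log (1 / 2 + 1 / (n : ℝ))

lemma one_sixth_le_gadgetDecay {n : ℕ} (hn : 3 ≤ n) : 1 / 6 ≤ gadgetDecay n := by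
  have hn' : (3 : ℝ) ≤ n := by exact_mod_cast hn
  have hinv : 1 / (n : ℝ) ≤ 1 / 3 := one_div_le_one_div_of_le (by norm_num) hn'
  have := log_le_sub_one_of_pos (by positivity : (0 : ℝ) < 1 / 2 + 1 / n)
  rw [gadgetDecay]
  linarith

lemma log_two_le_gadgetDecay_add (n : ℕ) : log 2 ≤ gadgetDecay n + 2 / n := by
  have h := log_le_sub_one_of_pos (by positivity : (0 : ℝ) < 2 * (1 / 2 + 1 / n))
  rw [log_mul two_ne_zero (by positivity), mul_add, mul_one_div 2 (n : ℝ)] at h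
  rw [gadgetDecay]
  linarith

lemma gadgetDecay_le_log_two (n : ℕ) : gadgetDecay n ≤ log 2 := by
  have h : log (1 / 2) ≤ log (1 / 2 + 1 / (n : ℝ)) :=
    log_le_log (by norm_num) (le_add_of_nonneg_right (by positivity))
  rw [one_div 2, log_inv] at h
  rw [gadgetDecay]
  linarith

lemma gadgetDecay_pos {n : ℕ} (hn : 3 ≤ n) : 0 < gadgetDecay n :=
  lt_of_lt_of_le (by norm_num) (one_sixth_le_gadgetDecay hn)

lemma one_le_gadgetRate {n : ℕ} (hn : 3 ≤ n) : 1 ≤ log 2 / gadgetDecay n :=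
  (one_le_div (gadgetDecay_pos hn)).2 (gadgetDecay_le_log_two n)

lemma fGadgetAux_le_mul_pow (n m : ℕ) (hn : 3 ≤ n) :
    (fGadgetAux n m : ℝ) ≤
      m * (log 3 / gadgetDecay n + 1) * (log 2 / gadgetDecay n) ^ m := by
  have hpos := gadgetDecay_pos hn
  refine le_natCast_mul_mul_pow_of_le_mul_add (x := fun m ↦ (fGadgetAux n m : ℝ))
    (by simp [fGadgetAux]) (one_le_gadgetRate hn) (by positivity) (fun m ↦ ?_) m
  have h := natCeil_log_div_le (neg_nonpos.2 hpos.le) (fGadgetAux n m)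
  rwa [neg_neg, gadgetDecay, neg_neg] at h

lemma gadgetRate_pow_le_exp {n : ℕ} (hn : 3 ≤ n) : (log 2 / gadgetDecay n) ^ n ≤ exp 12 := by
  have hD := one_sixth_le_gadgetDecay hn
  have hpos := gadgetDecay_pos hn
  have hrate : log 2 / gadgetDecay n ≤ 1 + 12 / n :=
    calc log 2 / gadgetDecay n ≤ (gadgetDecay n + 2 / n) / gadgetDecay n := by
          gcongr
          exact log_two_le_gadgetDecay_add n
      _ = 1 + 2 / n / gadgetDecay n := by field_simp
      _ ≤ 1 + 2 / n / (1 / 6) := by gcongr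
      _ = 1 + 12 / n := by ring
  have hexp := one_sub_div_pow_le_exp_neg (n := n) (t := -12) (by linarith [(Nat.cast_nonneg n : (0 : ℝ) ≤ n)])
  rw [neg_div, sub_neg_eq_add, neg_neg] at hexp
  exact (pow_le_pow_left₀ (div_nonneg (log_nonneg one_le_two) hpos.le) hrate n).trans hexp

lemma gadgetOffset_le {n : ℕ} (hn : 3 ≤ n) : log 3 / gadgetDecay n + 1 ≤ 13 := by
  have hD := one_sixth_le_gadgetDecay hn
  have h3 : log 3 ≤ 2 := by linarith [log_le_sub_one_of_pos (by norm_num : (0 : ℝ) < 3)]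
  calc log 3 / gadgetDecay n + 1 ≤ 2 / (1 / 6) + 1 := by
        gcongr
    _ = 13 := by norm_num

lemma fGadgetAux_le {n m : ℕ} (hn : 3 ≤ n) (hm : m ≤ n) :
    (fGadgetAux n m : ℝ) ≤ 13 * exp 12 * n := by
  have hrate := one_le_gadgetRate hn
  have hoffset := gadgetOffset_le hn
  have hoffset_nonneg : 0 ≤ log 3 / gadgetDecay n + 1 :=
    add_nonneg (div_nonneg (log_nonneg (by norm_num)) (gadgetDecay_pos hn).le) zero_le_one
  calc (fGadgetAux n m : ℝ)
      ≤ m * (log 3 / gadgetDecay n + 1) * (log 2 / gadgetDecay n) ^ m :=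
        fGadgetAux_le_mul_pow n m hn
    _ ≤ n * 13 * (log 2 / gadgetDecay n) ^ n := by
        gcongr
    _ ≤ n * 13 * exp 12 := by
        gcongr
        exact gadgetRate_pow_le_exp hn
    _ = 13 * exp 12 * n := by ring

/-- The gadget sizes f_n(k) are polynomially bounded: there exist constants
C > 0 and c > 0 with f_n(k) ≤ C·n^c for all n ≥ 3 and 1 ≤ k ≤ n, so the whole
difference-PI lower-bound construction has polynomial size. -/
theorem fGadget_poly_bound :
    ∃ C c : ℝ, 0 < C ∧ 0 < c ∧
      ∀ n : ℕ, 3 ≤ n → ∀ k : ℕ, 1 ≤ k → k ≤ n →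
        (fGadget n k : ℝ) ≤ C * (n : ℝ) ^ c := by
  refine ⟨13 * exp 12, 1, by positivity, one_pos, fun n hn k _ _ ↦ ?_⟩
  rw [rpow_one]
  exact fGadgetAux_le hn (Nat.sub_le n k)
end
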